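/- Reduced density matrix of the planar code state on a subset of qubits (Eq. (10)): let E ⊆ E(𝓛), Ē = E(𝓛) \ E, and for 1-chains x on E and y on Ē let x ⊕ y denote the 1-chain on E(𝓛) agreeing with x on E and y on Ē. Define the partial-trace matrix ρ_E, indexed by 1-chains on E, by ρ_E(x, x') = (1/|𝒵|) · #{y a 1-chain on Ē : x ⊕ y ∈ 𝒵 and x' ⊕ y ∈ 𝒵}. Then ρ_E(x, x') = 1/(|𝒮| · |𝒵(E)|) if x, x' ∈ 𝒵(E,∂E), ∂x = ∂x', and ∂x ∈ 𝒮; and ρ_E(x, x') = 0 otherwise. -/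

import Mathlib

open Finset

/-- Edges of the L×L square lattice: `horiz i j` is the edge from (i,j) to (i+1,j),
`vert i j` is the edge from (i,j) to (i,j+1). -/
inductive Edge (L : ℕ) where
  | horiz : Fin L → Fin (L+1) → Edge L
  | vert  : Fin (L+1) → Fin L → Edge L
deriving DecidableEq, Fintype

/-- Vertices of the L×L square lattice. -/
abbrev Vertex (L : ℕ) := Fin (L+1) × Fin (L+1)

/-- The two endpoints of an edge. -/
def Edge.ends {L : ℕ} : Edge L → Vertex L × Vertex L
  | .horiz i j => ((i.castSucc, j), (i.succ, j))
  | .vert i j  => ((i, j.castSucc), (i, j.succ))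

/-- A vertex is incident to an edge iff it is one of its endpoints. -/
def Incident {L : ℕ} (s : Vertex L) (e : Edge L) : Prop :=
  s = e.ends.1 ∨ s = e.ends.2

instance {L : ℕ} (s : Vertex L) (e : Edge L) : Decidable (Incident s e) := by
  unfold Incident; infer_instance

/-- The star δs: the set of edges incident to a vertex s. -/
def star {L : ℕ} (s : Vertex L) : Finset (Edge L) :=
  Finset.univ.filter (fun e => Incident s e)

/-- The boundary ∂p of the plaquette p = (i,j): the four edges of the unit square
with corners (i,j), (i+1,j), (i,j+1), (i+1,j+1). -/
def pBoundary {L : ℕ} (p : Fin L × Fin L) : Finset (Edge L) :=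
  {Edge.horiz p.1 p.2.castSucc, Edge.horiz p.1 p.2.succ,
   Edge.vert p.1.castSucc p.2, Edge.vert p.1.succ p.2}


/-- The boundary of a 1-chain x : E(𝓛) → ZMod 2 is the 0-chain ∂x with
(∂x)_s = ∑_{e ∈ δs} x_e. -/
def bd {L : ℕ} (x : Edge L → ZMod 2) : Vertex L → ZMod 2 :=
  fun s => ∑ e ∈ star s, x e

/-- The restriction of a 1-chain to a subset E of edges, extended by zero. -/
def restrict {L : ℕ} (E : Finset (Edge L)) (x : Edge L → ZMod 2) : Edge L → ZMod 2 :=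
  fun e => if e ∈ E then x e else 0

/-- ∂E: the set of vertices incident both to an edge of E and to an edge of the
complement Ē = E(𝓛) \ E. -/
def bdryV {L : ℕ} (E : Finset (Edge L)) : Finset (Vertex L) :=
  Finset.univ.filter (fun s => (∃ e ∈ E, Incident s e) ∧ (∃ e ∈ Eᶜ, Incident s e))

/-- A relative 1-cycle on E with respect to a set B of vertices: a 1-chain supported on
E whose boundary vanishes outside B. `IsRelCycle E (bdryV E) x` says x ∈ 𝒵(E,∂E). -/
def IsRelCycle {L : ℕ} (E : Finset (Edge L)) (B : Finset (Vertex L))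
    (x : Edge L → ZMod 2) : Prop :=
  (∀ e ∉ E, x e = 0) ∧ ∀ s ∉ B, bd x s = 0

/-- The syndrome space 𝒮(E): the set of boundaries of relative 1-cycles in 𝒵(E,∂E). -/
def syndromes {L : ℕ} (E : Finset (Edge L)) : Set (Vertex L → ZMod 2) :=
  {u | ∃ z : Edge L → ZMod 2, IsRelCycle E (bdryV E) z ∧ bd z = u}

/-- x ⊕ y: the 1-chain agreeing with x on E and with y on Ē. -/
def combine {L : ℕ} (E : Finset (Edge L)) (x y : Edge L → ZMod 2) : Edge L → ZMod 2 :=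
  fun e => if e ∈ E then x e else y e

/-- The partial-trace matrix ρ_E of the planar code state, indexed by 1-chains on E:
ρ_E(x,x') = (1/|𝒵|)·#{y a 1-chain on Ē : x ⊕ y ∈ 𝒵 and x' ⊕ y ∈ 𝒵}. -/
noncomputable def rhoE {L : ℕ} (E : Finset (Edge L)) (x x' : Edge L → ZMod 2) : ℂ :=
  (Nat.card {y : Edge L → ZMod 2 //
      (∀ e ∈ E, y e = 0) ∧ bd (combine E x y) = 0 ∧ bd (combine E x' y) = 0} : ℂ) /
    (Nat.card {z : Edge L → ZMod 2 // bd z = 0} : ℂ)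


section Aux

variable {L : ℕ}

private lemma z2_add_self (a : ZMod 2) : a + a = 0 := by revert a; decide

private lemma z2_eq_of_add_eq_zero {a b : ZMod 2} (h : a + b = 0) : a = b := by
  revert a b; decide

private lemma pi_add_self {α : Type*} (f : α → ZMod 2) : f + f = 0 := by
  funext e; exact z2_add_self _

private lemma bd_add (x y : Edge L → ZMod 2) : bd (x + y) = bd x + bd y := by
  funext s
  simp [bd, Finset.sum_add_distrib]

private lemma bd_eq_of_add_eq_zero {x y : Edge L → ZMod 2} (h : bd (x + y) = 0) :
    bd x = bd y := by
  rw [bd_add] at h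
  funext s
  exact z2_eq_of_add_eq_zero (congrFun h s)

private lemma mem_star_iff {s : Vertex L} {e : Edge L} : e ∈ star s ↔ Incident s e := by
  simp [_root_.star]

private lemma bd_eq_zero_of_no_inc (E : Finset (Edge L)) (z : Edge L → ZMod 2)
    (hz : ∀ e ∉ E, z e = 0) (s : Vertex L) (h : ¬ ∃ e ∈ E, Incident s e) :
    bd z s = 0 := by
  apply Finset.sum_eq_zero
  intro e he
  apply hz
  intro heE
  exact h ⟨e, heE, mem_star_iff.mp he⟩

private lemma not_mem_bdryV {E : Finset (Edge L)} {s : Vertex L} (h : s ∉ bdryV E) :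
    (¬ ∃ e ∈ E, Incident s e) ∨ (¬ ∃ e ∈ Eᶜ, Incident s e) := by
  by_contra hc
  push_neg at hc
  exact h (Finset.mem_filter.mpr ⟨Finset.mem_univ s, hc.1, hc.2⟩)

private lemma relcycle_of (E : Finset (Edge L)) (x y : Edge L → ZMod 2)
    (hx : ∀ e ∉ E, x e = 0) (hy : ∀ e ∉ Eᶜ, y e = 0) (hbd : bd x = bd y) :
    IsRelCycle E (bdryV E) x := by
  refine ⟨hx, fun s hs => ?_⟩
  rcases not_mem_bdryV hs with h | h
  · exact bd_eq_zero_of_no_inc E x hx s h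
  · rw [hbd]; exact bd_eq_zero_of_no_inc Eᶜ y hy s h

private lemma restrict_supp (E : Finset (Edge L)) (z : Edge L → ZMod 2) :
    ∀ e ∉ E, _root_.restrict E z e = 0 := fun _ he => if_neg he

private lemma restrict_split (E : Finset (Edge L)) (z : Edge L → ZMod 2) :
    _root_.restrict E z + _root_.restrict Eᶜ z = z := by
  funext e
  by_cases he : e ∈ E <;> simp [_root_.restrict, he, Pi.add_apply]

private lemma bd_restrict_compl (E : Finset (Edge L)) (z : Edge L → ZMod 2)
    (hz : bd z = 0) : bd (_root_.restrict Eᶜ z) = bd (_root_.restrict E z) := by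
  have h : bd (_root_.restrict E z + _root_.restrict Eᶜ z) = 0 := by rw [restrict_split]; exact hz
  exact (bd_eq_of_add_eq_zero h).symm

private lemma relcycle_restrict (E : Finset (Edge L)) (z : Edge L → ZMod 2)
    (hz : bd z = 0) : IsRelCycle E (bdryV E) (_root_.restrict E z) :=
  relcycle_of E _ (_root_.restrict Eᶜ z) (restrict_supp E z) (restrict_supp Eᶜ z)
    (bd_restrict_compl E z hz).symm

private lemma card_coset (P : (Edge L → ZMod 2) → Prop)
    (hP : ∀ a b, P a → P b → P (a + b))
    (y0 : Edge L → ZMod 2) (h0 : P y0) (u : Vertex L → ZMod 2) (hu : bd y0 = u) :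
    Nat.card {y : Edge L → ZMod 2 // P y ∧ bd y = u} =
      Nat.card {y : Edge L → ZMod 2 // P y ∧ bd y = 0} := by
  apply Nat.card_congr
  have key : ∀ y : Edge L → ZMod 2, y + y0 + y0 = y := fun y => by
    rw [add_assoc, pi_add_self, add_zero]
  refine ⟨fun y => ⟨y.1 + y0, hP _ _ y.2.1 h0, ?_⟩,
          fun y => ⟨y.1 + y0, hP _ _ y.2.1 h0, ?_⟩,
          fun y => Subtype.ext (key y.1), fun y => Subtype.ext (key y.1)⟩
  · rw [bd_add, y.2.2, hu, pi_add_self]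
  · rw [bd_add, y.2.2, hu, zero_add]

private lemma restrict_add_left (E : Finset (Edge L)) (a b : Edge L → ZMod 2)
    (ha : ∀ e ∉ E, a e = 0) (hb : ∀ e ∈ E, b e = 0) : _root_.restrict E (a + b) = a := by
  funext e
  by_cases he : e ∈ E
  · simp [_root_.restrict, he, Pi.add_apply, hb e he]
  · simp [_root_.restrict, he, ha e he]

private lemma restrict_add_right (E : Finset (Edge L)) (a b : Edge L → ZMod 2)
    (ha : ∀ e ∉ E, a e = 0) (hb : ∀ e ∈ E, b e = 0) : _root_.restrict Eᶜ (a + b) = b := by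
  funext e
  by_cases he : e ∈ E
  · simp [_root_.restrict, Finset.mem_compl, he, hb e he]
  · simp [_root_.restrict, Finset.mem_compl, he, Pi.add_apply, ha e he]

private def fiberEquiv (E : Finset (Edge L)) (u : Vertex L → ZMod 2) :
    {z : Edge L → ZMod 2 // bd z = 0 ∧ bd (_root_.restrict E z) = u} ≃
      {a : Edge L → ZMod 2 // (∀ e ∉ E, a e = 0) ∧ bd a = u} ×
      {b : Edge L → ZMod 2 // (∀ e ∈ E, b e = 0) ∧ bd b = u} where
  toFun z := (⟨_root_.restrict E z.1, restrict_supp E z.1, z.2.2⟩,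
    ⟨_root_.restrict Eᶜ z.1, fun e he => if_neg (by simp [Finset.mem_compl, he]),
      (bd_restrict_compl E z.1 z.2.1).trans z.2.2⟩)
  invFun p := ⟨p.1.1 + p.2.1, by
      rw [bd_add, p.1.2.2, p.2.2.2, pi_add_self], by
      rw [restrict_add_left E p.1.1 p.2.1 p.1.2.1 p.2.2.1, p.1.2.2]⟩
  left_inv z := Subtype.ext (restrict_split E z.1)
  right_inv p := by
    obtain ⟨⟨a, ha⟩, ⟨b, hb⟩⟩ := p
    refine Prod.ext (Subtype.ext ?_) (Subtype.ext ?_)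
    · exact restrict_add_left E a b ha.1 hb.1
    · exact restrict_add_right E a b ha.1 hb.1

private lemma card_subtype_eq (p : (Edge L → ZMod 2) → Prop) [DecidablePred p] :
    Nat.card {z : Edge L → ZMod 2 // p z} = (Finset.univ.filter p).card := by
  rw [Nat.card_eq_fintype_card, Fintype.card_subtype]

private lemma card_Z_eq (E : Finset (Edge L)) :
    Nat.card {z : Edge L → ZMod 2 // bd z = 0} =
      Nat.card (syndromes E ∩ syndromes Eᶜ : Set (Vertex L → ZMod 2)) *
        (Nat.card {z : Edge L → ZMod 2 // (∀ e ∉ E, z e = 0) ∧ bd z = 0} *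
         Nat.card {z : Edge L → ZMod 2 // (∀ e ∈ E, z e = 0) ∧ bd z = 0}) := by
  classical
  set S : Set (Vertex L → ZMod 2) := syndromes E ∩ syndromes Eᶜ with hS
  set Zf : Finset (Edge L → ZMod 2) := Finset.univ.filter (fun z => bd z = 0) with hZf
  set Sf : Finset (Vertex L → ZMod 2) := Finset.univ.filter (fun u => u ∈ S) with hSf
  have hmap : ∀ z ∈ Zf, bd (_root_.restrict E z) ∈ Sf := by
    intro z hz
    have hz0 : bd z = 0 := (Finset.mem_filter.mp hz).2
    refine Finset.mem_filter.mpr ⟨Finset.mem_univ _, ?_, ?_⟩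
    · exact ⟨_root_.restrict E z, relcycle_restrict E z hz0, rfl⟩
    · exact ⟨_root_.restrict Eᶜ z, relcycle_restrict Eᶜ z hz0, bd_restrict_compl E z hz0⟩
  have hsplit : Zf.card = ∑ u ∈ Sf, (Zf.filter (fun z => bd (_root_.restrict E z) = u)).card :=
    Finset.card_eq_sum_card_fiberwise hmap
  have hfiber : ∀ u ∈ Sf,
      (Zf.filter (fun z => bd (_root_.restrict E z) = u)).card =
        Nat.card {z : Edge L → ZMod 2 // (∀ e ∉ E, z e = 0) ∧ bd z = 0} *
        Nat.card {z : Edge L → ZMod 2 // (∀ e ∈ E, z e = 0) ∧ bd z = 0} := by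
    intro u hu
    obtain ⟨huE, huEc⟩ := (Finset.mem_filter.mp hu).2
    obtain ⟨w, ⟨hw1, _⟩, hw3⟩ := huE
    obtain ⟨v, ⟨hv1, _⟩, hv3⟩ := huEc
    have h1 : (Zf.filter (fun z => bd (_root_.restrict E z) = u)).card =
        Nat.card {z : Edge L → ZMod 2 // bd z = 0 ∧ bd (_root_.restrict E z) = u} := by
      rw [card_subtype_eq, hZf, Finset.filter_filter]
    rw [h1, Nat.card_congr (fiberEquiv E u), Nat.card_prod]
    congr 1
    · exact card_coset _ (fun a b ha hb e he => by
        simp [Pi.add_apply, ha e he, hb e he]) w hw1 u hw3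
    · refine card_coset _ (fun a b ha hb e he => by
        simp [Pi.add_apply, ha e he, hb e he]) v ?_ u hv3
      exact fun e he => hv1 e (by simp [Finset.mem_compl, he])
  have hScard : Nat.card S = Sf.card := by
    have hSS : S = ↑Sf := by ext u; simp [hSf]
    rw [hSS, Nat.card_coe_set_eq, Set.ncard_coe_finset]
  rw [card_subtype_eq, ← hZf, hsplit, Finset.sum_congr rfl hfiber, Finset.sum_const,
    hScard, smul_eq_mul]

private lemma my_div_helper (s e c : ℂ) (hs : s ≠ 0) (he : e ≠ 0) (hc : c ≠ 0) :
    c / (s * (e * c)) = 1 / (s * e) := by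
  field_simp

private lemma combine_eq (E : Finset (Edge L)) (x y : Edge L → ZMod 2)
    (hx : ∀ e ∉ E, x e = 0) (hy : ∀ e ∈ E, y e = 0) : combine E x y = x + y := by
  funext e
  by_cases he : e ∈ E
  · simp [combine, he, Pi.add_apply, hy e he]
  · simp [combine, he, hx e he]

end Aux

/-- the reduced density matrix of the planar code state on the qubits of
E: for 1-chains x, x' supported on E, ρ_E(x,x') = 1/(|𝒮|·|𝒵(E)|) if x, x' ∈ 𝒵(E,∂E)
with ∂x = ∂x' ∈ 𝒮, and ρ_E(x,x') = 0 otherwise. -/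
theorem reduced_density_matrix_planar_code (L : ℕ) (hL : 1 ≤ L)
    (E : Finset (Edge L)) (x x' : Edge L → ZMod 2)
    (hx : ∀ e ∉ E, x e = 0) (hx' : ∀ e ∉ E, x' e = 0) :
    ((IsRelCycle E (bdryV E) x ∧ IsRelCycle E (bdryV E) x' ∧ bd x = bd x' ∧
        bd x ∈ syndromes E ∩ syndromes Eᶜ) →
      rhoE E x x' =
        1 / ((Nat.card (syndromes E ∩ syndromes Eᶜ : Set (Vertex L → ZMod 2)) : ℂ) *
          (Nat.card {z : Edge L → ZMod 2 // (∀ e ∉ E, z e = 0) ∧ bd z = 0} : ℂ))) ∧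
    (¬(IsRelCycle E (bdryV E) x ∧ IsRelCycle E (bdryV E) x' ∧ bd x = bd x' ∧
        bd x ∈ syndromes E ∩ syndromes Eᶜ) →
      rhoE E x x' = 0) := by
  classical
  constructor
  · rintro ⟨hxc, hx'c, hbb, hsynd⟩
    have hsE : bd x ∈ syndromes E := hsynd.1
    have hsEc : bd x ∈ syndromes Eᶜ := hsynd.2
    obtain ⟨w, ⟨hw1, _⟩, hw3⟩ := hsEc
    have hw1' : ∀ e ∈ E, w e = 0 := fun e he => hw1 e (by simp [Finset.mem_compl, he])
    have hnum_iff : ∀ y : Edge L → ZMod 2,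
        ((∀ e ∈ E, y e = 0) ∧ bd (combine E x y) = 0 ∧ bd (combine E x' y) = 0) ↔
        ((∀ e ∈ E, y e = 0) ∧ bd y = bd x) := by
      intro y
      constructor
      · rintro ⟨h1, h2, _⟩
        refine ⟨h1, ?_⟩
        rw [combine_eq E x y hx h1] at h2
        exact (bd_eq_of_add_eq_zero h2).symm
      · rintro ⟨h1, h2⟩
        refine ⟨h1, ?_, ?_⟩
        · rw [combine_eq E x y hx h1, bd_add, h2, pi_add_self]
        · rw [combine_eq E x' y hx' h1, bd_add, h2, hbb, pi_add_self]
    have hnum : Nat.card {y : Edge L → ZMod 2 //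
        (∀ e ∈ E, y e = 0) ∧ bd (combine E x y) = 0 ∧ bd (combine E x' y) = 0} =
        Nat.card {y : Edge L → ZMod 2 // (∀ e ∈ E, y e = 0) ∧ bd y = 0} := by
      rw [Nat.card_congr (Equiv.subtypeEquivRight hnum_iff)]
      exact card_coset _ (fun a b ha hb e he => by
        simp [Pi.add_apply, ha e he, hb e he]) w hw1' (bd x) hw3
    have hbd0 : bd (0 : Edge L → ZMod 2) = 0 := by
      funext s; simp [bd]
    have hcE : (0 : ℕ) < Nat.card {z : Edge L → ZMod 2 // (∀ e ∉ E, z e = 0) ∧ bd z = 0} := by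
      have : Nonempty {z : Edge L → ZMod 2 // (∀ e ∉ E, z e = 0) ∧ bd z = 0} :=
        ⟨⟨0, fun _ _ => rfl, hbd0⟩⟩
      exact Nat.card_pos
    have hcC' : (0 : ℕ) < Nat.card {y : Edge L → ZMod 2 // (∀ e ∈ E, y e = 0) ∧ bd y = 0} := by
      have : Nonempty {y : Edge L → ZMod 2 // (∀ e ∈ E, y e = 0) ∧ bd y = 0} :=
        ⟨⟨0, fun _ _ => rfl, hbd0⟩⟩
      exact Nat.card_pos
    have hcS : (0 : ℕ) < Nat.card (syndromes E ∩ syndromes Eᶜ : Set (Vertex L → ZMod 2)) := by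
      have : Nonempty (syndromes E ∩ syndromes Eᶜ : Set (Vertex L → ZMod 2)) := ⟨⟨bd x, hsynd⟩⟩
      exact Nat.card_pos
    unfold rhoE
    rw [hnum, card_Z_eq E]
    have hC : ((Nat.card {y : Edge L → ZMod 2 // (∀ e ∈ E, y e = 0) ∧ bd y = 0} : ℕ) : ℂ) ≠ 0 :=
      Nat.cast_ne_zero.mpr hcC'.ne'
    have hE : ((Nat.card {z : Edge L → ZMod 2 // (∀ e ∉ E, z e = 0) ∧ bd z = 0} : ℕ) : ℂ) ≠ 0 :=
      Nat.cast_ne_zero.mpr hcE.ne'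
    have hS : ((Nat.card (syndromes E ∩ syndromes Eᶜ : Set (Vertex L → ZMod 2)) : ℕ) : ℂ) ≠ 0 :=
      Nat.cast_ne_zero.mpr hcS.ne'
    push_cast
    exact my_div_helper _ _ _ hS hE hC
  · intro hnot
    have hempty : IsEmpty {y : Edge L → ZMod 2 //
        (∀ e ∈ E, y e = 0) ∧ bd (combine E x y) = 0 ∧ bd (combine E x' y) = 0} := by
      by_contra hne
      rw [not_isEmpty_iff] at hne
      obtain ⟨y, h1, h2, h3⟩ := hne
      rw [combine_eq E x y hx h1] at h2
      rw [combine_eq E x' y hx' h1] at h3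
      have e2 : bd x = bd y := bd_eq_of_add_eq_zero h2
      have e3 : bd x' = bd y := bd_eq_of_add_eq_zero h3
      have hy' : ∀ e ∉ Eᶜ, y e = 0 := fun e he => h1 e (by
        by_contra h'
        exact he (Finset.mem_compl.mpr h'))
      have hxE : ∀ e ∉ Eᶜᶜ, x e = 0 := fun e he => hx e (by rwa [compl_compl] at he)
      refine hnot ⟨relcycle_of E x y hx hy' e2, relcycle_of E x' y hx' hy' e3,
        e2.trans e3.symm, ?_, ?_⟩
      · exact ⟨x, relcycle_of E x y hx hy' e2, rfl⟩
      · exact ⟨y, relcycle_of Eᶜ y x hy' hxE e2.symm, e2.symm⟩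
    unfold rhoE
    rw [Nat.card_of_isEmpty]
    rw [Nat.cast_zero, zero_div]
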